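/- arXiv:2101.05186 — 3 statements merged into one kernel-verified Lean document; each statement's English description precedes it below -/
import Mathlib

section
/- For every timestep τ ≥ 0, the total mass stored in the MC-LSTM memory cells satisfies m_c(τ) = m_c(0) + Σ_{t=1}^{τ} x(t) − Σ_{t=1}^{τ} m_h(t); that is, the change of mass in the memory cells equals the accumulated input mass minus the accumulated output mass. -/
/-! Each step conserves mass: a left-stochastic `R t` preserves the total of `c (t - 1)`, the input
gate distributes all of `x t` since its entries sum to 1, and the output gate only splits
`mtot t` between `c t` and `h t`. Summing this balance over the steps telescopes. -/

open Finset Matrix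

theorem Matrix.sum_mulVec_of_sum_col_eq_one {m n α : Type*} [Fintype m] [Fintype n]
    [NonAssocSemiring α] {R : Matrix m n α} (hR : ∀ j, ∑ i, R i j = 1) (v : n → α) :
    ∑ i, (R *ᵥ v) i = ∑ j, v j := by
  simp only [mulVec, dotProduct]
  rw [sum_comm]
  simp only [← sum_mul, hR, one_mul]

theorem sum_one_sub_mul_add_sum_mul {ι α : Type*} [Fintype ι] [NonAssocRing α] (o v : ι → α) :
    ∑ k, (1 - o k) * v k + ∑ k, o k * v k = ∑ k, v k := by
  rw [← sum_add_distrib]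
  exact sum_congr rfl fun k _ => by rw [← add_mul, sub_add_cancel, one_mul]

theorem eq_add_sum_Icc_sub_sum_Icc_of_balance {G : Type*} [AddCommGroup G] {s x y : ℕ → G}
    (h : ∀ t, s (t + 1) + y (t + 1) = s t + x (t + 1)) (τ : ℕ) :
    s τ = s 0 + ∑ t ∈ Icc 1 τ, x t - ∑ t ∈ Icc 1 τ, y t := by
  induction τ with
  | zero => simp
  | succ n ih =>
    rw [sum_Icc_succ_top n.succ_pos', sum_Icc_succ_top n.succ_pos', eq_sub_of_add_eq (h n), ih]
    abel

theorem mclstm_conservation_general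
    (K : ℕ)
    (x : ℕ → ℝ)
    (i : ℕ → Fin K → ℝ)
    (hi_sum : ∀ t, 1 ≤ t → ∑ k, i t k = 1)
    (o : ℕ → Fin K → ℝ)
    (R : ℕ → Matrix (Fin K) (Fin K) ℝ)
    (hR_col : ∀ t j, 1 ≤ t → ∑ k, R t k j = 1)
    (c mtot h : ℕ → Fin K → ℝ)
    (hmtot : ∀ t, 1 ≤ t → mtot t = (R t).mulVec (c (t - 1)) + x t • i t)
    (hc : ∀ t, 1 ≤ t → c t = fun k => (1 - o t k) * mtot t k)
    (hh : ∀ t, 1 ≤ t → h t = fun k => o t k * mtot t k)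
    (τ : ℕ) :
    ∑ k, c τ k =
      ∑ k, c 0 k + (∑ t ∈ Finset.Icc 1 τ, x t) - ∑ t ∈ Finset.Icc 1 τ, ∑ k, h t k := by
  refine eq_add_sum_Icc_sub_sum_Icc_of_balance (s := fun t => ∑ k, c t k)
    (y := fun t => ∑ k, h t k) (fun t => ?_) τ
  have ht : 1 ≤ t + 1 := t.succ_pos
  have hsplit : ∑ k, c (t + 1) k + ∑ k, h (t + 1) k = ∑ k, mtot (t + 1) k := by
    rw [hc _ ht, hh _ ht]
    exact sum_one_sub_mul_add_sum_mul _ _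
  have hin : ∑ k, mtot (t + 1) k = ∑ k, c t k + x (t + 1) := by
    simp only [hmtot _ ht, Nat.add_sub_cancel, Pi.add_apply, Pi.smul_apply, smul_eq_mul,
      sum_add_distrib, ← mul_sum, hi_sum _ ht, mul_one,
      sum_mulVec_of_sum_col_eq_one (fun j => hR_col _ j ht)]
  rw [hsplit, hin]

/-- **MC-LSTM conservation property.**
For every timestep τ ≥ 0, the total mass stored in the MC-LSTM memory cells satisfies
m_c(τ) = m_c(0) + Σ_{t=1}^{τ} x(t) − Σ_{t=1}^{τ} m_h(t). -/
theorem mclstm_conservation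
    (K : ℕ)
    (x : ℕ → ℝ) (hx : ∀ t, 1 ≤ t → 0 ≤ x t)
    (i : ℕ → Fin K → ℝ)
    (hi_nonneg : ∀ t k, 1 ≤ t → 0 ≤ i t k)
    (hi_sum : ∀ t, 1 ≤ t → ∑ k, i t k = 1)
    (o : ℕ → Fin K → ℝ)
    (ho : ∀ t k, 1 ≤ t → o t k ∈ Set.Icc (0 : ℝ) 1)
    (R : ℕ → Matrix (Fin K) (Fin K) ℝ)
    (hR_nonneg : ∀ t k j, 1 ≤ t → 0 ≤ R t k j)
    (hR_col : ∀ t j, 1 ≤ t → ∑ k, R t k j = 1)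
    (c mtot h : ℕ → Fin K → ℝ)
    (hc0 : ∀ k, 0 ≤ c 0 k)
    (hmtot : ∀ t, 1 ≤ t → mtot t = (R t).mulVec (c (t - 1)) + x t • i t)
    (hc : ∀ t, 1 ≤ t → c t = fun k => (1 - o t k) * mtot t k)
    (hh : ∀ t, 1 ≤ t → h t = fun k => o t k * mtot t k)
    (τ : ℕ) :
    ∑ k, c τ k =
      ∑ k, c 0 k + (∑ t ∈ Finset.Icc 1 τ, x t) - ∑ t ∈ Finset.Icc 1 τ, ∑ k, h t k :=
  mclstm_conservation_general K x i hi_sum o R hR_col c mtot h hmtot hc hh τ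
end

section
/- For every timestep τ ≥ 0 and every index k, the memory cell value is bounded by the accumulated mass input plus the initial stored mass: |c_k(τ)| ≤ Σ_{t=1}^{τ} x(t) + m_c(0). -/
/-!
Redistribution by a column-stochastic matrix conserves the stored mass and the input gate adds
exactly `x(t)`, while the output gate only removes mass; every quantity stays nonnegative. Hence
the stored mass at time `τ` is at most the accumulated input plus `m_c(0)`, and it dominates
each (nonnegative) cell.
-/

open Finset Matrix

section MassStep

variable {n : Type*} [Fintype n] [DecidableEq n]

def cellUpdate (M : Matrix n n ℝ) (i o : n → ℝ) (x : ℝ) (c : n → ℝ) : n → ℝ :=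
  (1 - o) * (M *ᵥ c + x • i)

theorem sum_mulVec_add_smul_of_mem_colStochastic {M : Matrix n n ℝ} (hM : M ∈ colStochastic ℝ n)
    (c i : n → ℝ) (hi : ∑ k, i k = 1) (x : ℝ) :
    ∑ k, (M *ᵥ c + x • i) k = ∑ k, c k + x := by
  simp only [Pi.add_apply, Pi.smul_apply, smul_eq_mul, sum_add_distrib, ← mul_sum, hi, mul_one,
    sum_mulVec_of_mem_colStochastic hM]

theorem mulVec_add_smul_nonneg_of_mem_colStochastic {M : Matrix n n ℝ}
    (hM : M ∈ colStochastic ℝ n) {c i : n → ℝ} (hc : 0 ≤ c) (hi : 0 ≤ i) {x : ℝ} (hx : 0 ≤ x) :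
    0 ≤ M *ᵥ c + x • i :=
  add_nonneg (nonneg_mulVec_of_mem_colStochastic hM hc) (smul_nonneg hx hi)

theorem cellUpdate_nonneg_and_sum_le {M : Matrix n n ℝ} (hM : M ∈ colStochastic ℝ n)
    {c i o : n → ℝ} (hc : 0 ≤ c) (hi : 0 ≤ i) (hi_sum : ∑ k, i k = 1) (ho₀ : 0 ≤ o) (ho₁ : o ≤ 1)
    {x : ℝ} (hx : 0 ≤ x) :
    0 ≤ cellUpdate M i o x c ∧ ∑ k, cellUpdate M i o x c k ≤ ∑ k, c k + x := by
  have hm := mulVec_add_smul_nonneg_of_mem_colStochastic hM hc hi hx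
  refine ⟨mul_nonneg (sub_nonneg.2 ho₁) hm, ?_⟩
  rw [← sum_mulVec_add_smul_of_mem_colStochastic hM c i hi_sum x]
  exact sum_le_sum fun k _ => mul_le_of_le_one_left (hm k) (sub_le_self _ (ho₀ k))

end MassStep

theorem nonneg_and_sum_le_sum_Icc_add {n : Type*} [Fintype n] {c : ℕ → n → ℝ} {x : ℕ → ℝ}
    (h₀ : 0 ≤ c 0)
    (hstep : ∀ t, 0 ≤ c t → 0 ≤ c (t + 1) ∧ ∑ k, c (t + 1) k ≤ ∑ k, c t k + x (t + 1)) (τ : ℕ) :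
    0 ≤ c τ ∧ ∑ k, c τ k ≤ ∑ t ∈ Icc 1 τ, x t + ∑ k, c 0 k := by
  induction τ with
  | zero => simp [h₀]
  | succ t ih =>
    obtain ⟨hnonneg, hsum⟩ := hstep t ih.1
    refine ⟨hnonneg, ?_⟩
    rw [sum_Icc_succ_top (Nat.le_add_left 1 t)]
    linarith [ih.2]

theorem mclstm_cell_bound_general
    (K : ℕ)
    (x : ℕ → ℝ) (hx : ∀ t, 1 ≤ t → 0 ≤ x t)
    (i : ℕ → Fin K → ℝ)
    (hi_nonneg : ∀ t k, 1 ≤ t → 0 ≤ i t k)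
    (hi_sum : ∀ t, 1 ≤ t → ∑ k, i t k = 1)
    (o : ℕ → Fin K → ℝ)
    (ho : ∀ t k, 1 ≤ t → o t k ∈ Set.Icc (0 : ℝ) 1)
    (R : ℕ → Matrix (Fin K) (Fin K) ℝ)
    (hR_nonneg : ∀ t k j, 1 ≤ t → 0 ≤ R t k j)
    (hR_col : ∀ t j, 1 ≤ t → ∑ k, R t k j = 1)
    (c mtot : ℕ → Fin K → ℝ)
    (hc0 : ∀ k, 0 ≤ c 0 k)
    (hmtot : ∀ t, 1 ≤ t → mtot t = (R t).mulVec (c (t - 1)) + x t • i t)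
    (hc : ∀ t, 1 ≤ t → c t = fun k => (1 - o t k) * mtot t k)
    (τ : ℕ) (k : Fin K) :
    |c τ k| ≤ (∑ t ∈ Finset.Icc 1 τ, x t) + ∑ j, c 0 j := by
  have hstep (t : ℕ) (hct : 0 ≤ c t) :
      0 ≤ c (t + 1) ∧ ∑ k, c (t + 1) k ≤ ∑ k, c t k + x (t + 1) := by
    have ht : 1 ≤ t + 1 := Nat.le_add_left 1 t
    have hR : R (t + 1) ∈ colStochastic ℝ (Fin K) :=
      mem_colStochastic_iff_sum.2 ⟨fun k j => hR_nonneg _ k j ht, fun j => hR_col _ j ht⟩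
    have hct' : c (t + 1) = cellUpdate (R (t + 1)) (i (t + 1)) (o (t + 1)) (x (t + 1)) (c t) := by
      rw [hc _ ht, hmtot _ ht]; rfl
    rw [hct']
    exact cellUpdate_nonneg_and_sum_le hR hct (fun k => hi_nonneg _ k ht) (hi_sum _ ht)
      (fun k => (ho _ k ht).1) (fun k => (ho _ k ht).2) (hx _ ht)
  obtain ⟨hnonneg, hmass⟩ := nonneg_and_sum_le_sum_Icc_add hc0 hstep τ
  calc |c τ k| = c τ k := abs_of_nonneg (hnonneg k)
    _ ≤ ∑ j, c τ j := single_le_sum (fun j _ => hnonneg j) (mem_univ k)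
    _ ≤ _ := hmass

/-- **Boundedness of MC-LSTM cell states:** for every τ ≥ 0 and index k,
|c_k(τ)| ≤ Σ_{t=1}^{τ} x(t) + m_c(0). -/
theorem mclstm_cell_bound
    (K : ℕ)
    (x : ℕ → ℝ) (hx : ∀ t, 1 ≤ t → 0 ≤ x t)
    (i : ℕ → Fin K → ℝ)
    (hi_nonneg : ∀ t k, 1 ≤ t → 0 ≤ i t k)
    (hi_sum : ∀ t, 1 ≤ t → ∑ k, i t k = 1)
    (o : ℕ → Fin K → ℝ)
    (ho : ∀ t k, 1 ≤ t → o t k ∈ Set.Icc (0 : ℝ) 1)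
    (R : ℕ → Matrix (Fin K) (Fin K) ℝ)
    (hR_nonneg : ∀ t k j, 1 ≤ t → 0 ≤ R t k j)
    (hR_col : ∀ t j, 1 ≤ t → ∑ k, R t k j = 1)
    (c mtot h : ℕ → Fin K → ℝ)
    (hc0 : ∀ k, 0 ≤ c 0 k)
    (hmtot : ∀ t, 1 ≤ t → mtot t = (R t).mulVec (c (t - 1)) + x t • i t)
    (hc : ∀ t, 1 ≤ t → c t = fun k => (1 - o t k) * mtot t k)
    (hh : ∀ t, 1 ≤ t → h t = fun k => o t k * mtot t k)
    (τ : ℕ) (k : Fin K) :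
    |c τ k| ≤ (∑ t ∈ Finset.Icc 1 τ, x t) + ∑ j, c 0 j :=
  mclstm_cell_bound_general K x hx i hi_nonneg hi_sum o ho R hR_nonneg hR_col c mtot hc0 hmtot hc τ
    k
end

section
/- For every timestep τ ≥ 0, the accumulated mass efflux is bounded by the initial stored mass plus the accumulated mass input: Σ_{t=1}^{τ} m_h(t) ≤ m_c(0) + Σ_{t=1}^{τ} x(t). -/
/-!
Mass is conserved step by step: the column-stochastic redistribution preserves the total mass of the
cell state, the input gate adds exactly `x(t)`, and the output gate only splits `m_tot(t)` between
the efflux and the new cell state. Telescoping, the accumulated efflux plus the stored mass `m_c(τ)`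
equals `m_c(0)` plus the accumulated input; the bound follows because the cell state stays
nonnegative.
-/

open Finset Matrix

theorem Finset.sum_Icc_add_eq_add_sum_Icc_of_step {M : Type*} [AddCommMonoid M] {h c x : ℕ → M}
    (hstep : ∀ t, h (t + 1) + c (t + 1) = c t + x (t + 1)) (τ : ℕ) :
    ∑ t ∈ Icc 1 τ, h t + c τ = c 0 + ∑ t ∈ Icc 1 τ, x t := by
  induction τ with
  | zero => simp
  | succ n ih =>
    rw [sum_Icc_succ_top (by omega), sum_Icc_succ_top (by omega), add_assoc, hstep,
      ← add_assoc, ih, add_assoc]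

theorem Finset.sum_mul_add_sum_one_sub_mul {ι R : Type*} [CommRing R] (s : Finset ι)
    (o m : ι → R) : ∑ k ∈ s, o k * m k + ∑ k ∈ s, (1 - o k) * m k = ∑ k ∈ s, m k := by
  rw [← sum_add_distrib]
  exact sum_congr rfl fun k _ => by ring

namespace Matrix

variable {R n : Type*} [Fintype n] [DecidableEq n] [CommSemiring R] [PartialOrder R]
  [IsOrderedRing R] {M : Matrix n n R}

theorem sum_mulVec_add_smul_of_mem_colStochastic (hM : M ∈ colStochastic R n) (v : n → R)
    {w : n → R} (hw : ∑ k, w k = 1) (a : R) : ∑ k, (M *ᵥ v + a • w) k = ∑ k, v k + a := by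
  simp only [Pi.add_apply, Pi.smul_apply, smul_eq_mul, sum_add_distrib, ← mul_sum, hw, mul_one,
    sum_mulVec_of_mem_colStochastic hM]

theorem nonneg_mulVec_add_smul_of_mem_colStochastic (hM : M ∈ colStochastic R n) {v w : n → R}
    (hv : ∀ k, 0 ≤ v k) (hw : ∀ k, 0 ≤ w k) {a : R} (ha : 0 ≤ a) (k : n) :
    0 ≤ (M *ᵥ v + a • w) k :=
  add_nonneg (nonneg_mulVec_of_mem_colStochastic hM hv k) (mul_nonneg ha (hw k))

end Matrix

/-- **Bound on accumulated mass efflux:** for every τ ≥ 0,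
Σ_{t=1}^{τ} m_h(t) ≤ m_c(0) + Σ_{t=1}^{τ} x(t). -/
theorem mclstm_efflux_bound
    (K : ℕ)
    (x : ℕ → ℝ) (hx : ∀ t, 1 ≤ t → 0 ≤ x t)
    (i : ℕ → Fin K → ℝ)
    (hi_nonneg : ∀ t k, 1 ≤ t → 0 ≤ i t k)
    (hi_sum : ∀ t, 1 ≤ t → ∑ k, i t k = 1)
    (o : ℕ → Fin K → ℝ)
    (ho : ∀ t k, 1 ≤ t → o t k ∈ Set.Icc (0 : ℝ) 1)
    (R : ℕ → Matrix (Fin K) (Fin K) ℝ)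
    (hR_nonneg : ∀ t k j, 1 ≤ t → 0 ≤ R t k j)
    (hR_col : ∀ t j, 1 ≤ t → ∑ k, R t k j = 1)
    (c mtot h : ℕ → Fin K → ℝ)
    (hc0 : ∀ k, 0 ≤ c 0 k)
    (hmtot : ∀ t, 1 ≤ t → mtot t = (R t).mulVec (c (t - 1)) + x t • i t)
    (hc : ∀ t, 1 ≤ t → c t = fun k => (1 - o t k) * mtot t k)
    (hh : ∀ t, 1 ≤ t → h t = fun k => o t k * mtot t k)
    (τ : ℕ) :
    ∑ t ∈ Finset.Icc 1 τ, ∑ k, h t k ≤ ∑ k, c 0 k + ∑ t ∈ Finset.Icc 1 τ, x t := by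
  have hR : ∀ t, R (t + 1) ∈ colStochastic ℝ (Fin K) := fun t =>
    mem_colStochastic_iff_sum.2
      ⟨fun k j => hR_nonneg _ k j t.succ_pos, fun j => hR_col _ j t.succ_pos⟩
  have hmtot' : ∀ t, mtot (t + 1) = R (t + 1) *ᵥ c t + x (t + 1) • i (t + 1) := fun t =>
    hmtot _ t.succ_pos
  have hc_nonneg : ∀ t k, 0 ≤ c t k := by
    intro t
    induction t with
    | zero => exact hc0
    | succ t ih =>
      intro k
      rw [hc _ t.succ_pos, hmtot']
      exact mul_nonneg (sub_nonneg.2 (ho _ k t.succ_pos).2)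
        (nonneg_mulVec_add_smul_of_mem_colStochastic (hR t) ih
          (fun k => hi_nonneg _ k t.succ_pos) (hx _ t.succ_pos) k)
  have hstep : ∀ t, ∑ k, h (t + 1) k + ∑ k, c (t + 1) k = ∑ k, c t k + x (t + 1) := by
    intro t
    rw [hh _ t.succ_pos, hc _ t.succ_pos, sum_mul_add_sum_one_sub_mul, hmtot',
      sum_mulVec_add_smul_of_mem_colStochastic (hR t) _ (hi_sum _ t.succ_pos)]
  have hbalance := sum_Icc_add_eq_add_sum_Icc_of_step
    (h := fun t => ∑ k, h t k) (c := fun t => ∑ k, c t k) hstep τ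
  linarith [sum_nonneg fun k (_ : k ∈ univ) => hc_nonneg τ k]
end
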